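/- arXiv:0708.3164 — 10 statements merged into one kernel-verified Lean document; each statement's English description precedes it below -/
import Mathlib

section
/- Let K be a field of characteristic zero, n ≥ 1, and let a, b, c be n×n matrices over K that pairwise commute and satisfy a+b+c = α·I, a²+b²+c² = β·I, a³+b³+c³ = γ·I for scalars α, β, γ. Then the polynomial r(x) = 6x³ - 6αx² + (3α² - 3β)x + 3αβ - 2γ - α³ annihilates each of a, b, c. -/
/-!
By Newton's identities, the power sums `α, β, γ` of `a, b, c` determine their elementary symmetric
functions `e₁ = α`, `e₂ = (α² - β) / 2`, `e₃ = (α³ - 3αβ + 2γ) / 6`, and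
`r = 6 (x³ - e₁ x² + e₂ x - e₃) = 6 (x - a)(x - b)(x - c)`, which vanishes at `a`.
Since `a, b, c` commute, this computation can be carried out in the commutative subalgebra they
generate.
-/

theorem cubic_eq_zero_of_powerSums {K R : Type*} [CommRing K] [CommRing R] [Algebra K R]
    (α β γ : K) (a b c : R)
    (h1 : a + b + c = α • (1 : R))
    (h2 : a ^ 2 + b ^ 2 + c ^ 2 = β • (1 : R))
    (h3 : a ^ 3 + b ^ 3 + c ^ 3 = γ • (1 : R)) :
    (6 : K) • a ^ 3 - (6 * α) • a ^ 2 + (3 * α ^ 2 - 3 * β) • a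
      + (3 * α * β - 2 * γ - α ^ 3) • (1 : R) = 0 := by
  simp only [Algebra.smul_def, map_mul, map_sub, map_pow, map_ofNat, mul_one] at *
  set A := algebraMap K R α
  linear_combination (6 * a ^ 2 - 3 * (A + (a + b + c)) * a + (a + b + c) ^ 2 + (a + b + c) * A
      + A ^ 2 - 3 * (a ^ 2 + b ^ 2 + c ^ 2)) * h1 + (3 * a - 3 * A) * h2 + 2 * h3

theorem cubic_eq_zero_of_powerSums_of_commute {K R : Type*} [CommRing K] [Ring R] [Algebra K R]
    (α β γ : K) {a b c : R} (hab : Commute a b) (hac : Commute a c) (hbc : Commute b c)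
    (h1 : a + b + c = α • (1 : R))
    (h2 : a ^ 2 + b ^ 2 + c ^ 2 = β • (1 : R))
    (h3 : a ^ 3 + b ^ 3 + c ^ 3 = γ • (1 : R)) :
    (6 : K) • a ^ 3 - (6 * α) • a ^ 2 + (3 * α ^ 2 - 3 * β) • a
      + (3 * α * β - 2 * γ - α ^ 3) • (1 : R) = 0 := by
  set S := Algebra.adjoin K ({a, b, c} : Set R)
  have hcomm : ∀ x ∈ ({a, b, c} : Set R), ∀ y ∈ ({a, b, c} : Set R), x * y = y * x := by
    simp only [Set.mem_insert_iff, Set.mem_singleton_iff]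
    rintro x (rfl | rfl | rfl) y (rfl | rfl | rfl) <;>
      first | rfl | exact hab.eq | exact hab.eq.symm | exact hac.eq | exact hac.eq.symm
            | exact hbc.eq | exact hbc.eq.symm
  have : IsMulCommutative S := Algebra.isMulCommutative_adjoin K hcomm
  have mem : ∀ x ∈ ({a, b, c} : Set R), x ∈ S := fun x hx => Algebra.subset_adjoin hx
  open scoped IsMulCommutative in
  exact congrArg Subtype.val <| cubic_eq_zero_of_powerSums α β γ
    (⟨a, mem a (by simp)⟩ : S) ⟨b, mem b (by simp)⟩ ⟨c, mem c (by simp)⟩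
    (Subtype.ext h1) (Subtype.ext h2) (Subtype.ext h3)

theorem stmt0_general {K : Type*} [Field K] {n : ℕ}
    (α β γ : K) (a b c : Matrix (Fin n) (Fin n) K)
    (hab : a * b = b * a) (hac : a * c = c * a) (hbc : b * c = c * b)
    (h1 : a + b + c = α • (1 : Matrix (Fin n) (Fin n) K))
    (h2 : a ^ 2 + b ^ 2 + c ^ 2 = β • (1 : Matrix (Fin n) (Fin n) K))
    (h3 : a ^ 3 + b ^ 3 + c ^ 3 = γ • (1 : Matrix (Fin n) (Fin n) K)) :
    ∀ m ∈ ({a, b, c} : Set (Matrix (Fin n) (Fin n) K)),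
      (6 : K) • m ^ 3 - (6 * α) • m ^ 2 + (3 * α ^ 2 - 3 * β) • m
        + (3 * α * β - 2 * γ - α ^ 3) • (1 : Matrix (Fin n) (Fin n) K) = 0 := by
  have hab : Commute a b := hab
  have hac : Commute a c := hac
  have hbc : Commute b c := hbc
  rintro m (rfl | rfl | rfl)
  · exact cubic_eq_zero_of_powerSums_of_commute α β γ hab hac hbc h1 h2 h3
  · exact cubic_eq_zero_of_powerSums_of_commute α β γ hab.symm hbc hac
      (by rw [← h1]; abel) (by rw [← h2]; abel) (by rw [← h3]; abel)
  · exact cubic_eq_zero_of_powerSums_of_commute α β γ hac.symm hbc.symm hab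
      (by rw [← h1]; abel) (by rw [← h2]; abel) (by rw [← h3]; abel)

theorem stmt0 {K : Type*} [Field K] [CharZero K] {n : ℕ} (hn : 1 ≤ n)
    (α β γ : K) (a b c : Matrix (Fin n) (Fin n) K)
    (hab : a * b = b * a) (hac : a * c = c * a) (hbc : b * c = c * b)
    (h1 : a + b + c = α • (1 : Matrix (Fin n) (Fin n) K))
    (h2 : a ^ 2 + b ^ 2 + c ^ 2 = β • (1 : Matrix (Fin n) (Fin n) K))
    (h3 : a ^ 3 + b ^ 3 + c ^ 3 = γ • (1 : Matrix (Fin n) (Fin n) K)) :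
    ∀ m ∈ ({a, b, c} : Set (Matrix (Fin n) (Fin n) K)),
      (6 : K) • m ^ 3 - (6 * α) • m ^ 2 + (3 * α ^ 2 - 3 * β) • m
        + (3 * α * β - 2 * γ - α ^ 3) • (1 : Matrix (Fin n) (Fin n) K) = 0 :=
  stmt0_general α β γ a b c hab hac hbc h1 h2 h3
end

section
/- Let K be an algebraically closed field of characteristic zero and let a, b, c be n×n matrices over K satisfying a+b+c = 0, a²+b²+c² = 0, a³+b³+c³ = 0, with additionally a²b = ba², 2a³ = a²b + bab, a²ba = a³b = -(1/2)a⁴, and a⁵ = 0. Then abab = (5/2)a⁴. -/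
theorem two_add_one_div_two {K : Type*} [Field K] : (2 : K) + 1 / 2 = 5 / 2 := by
  rcases eq_or_ne (2 : K) 0 with h2 | h2
  · -- `1 / 2 = 0` here, so both sides vanish.
    have h5 : (5 : K) = 1 + 2 * 2 := by norm_num
    simp [h2, h5]
  · linear_combination (-2 : K) * mul_inv_cancel₀ h2

theorem mul_mul_mul_eq_two_nsmul_pow_four_sub {R : Type*} [Ring R] {a b : R}
    (h : 2 • a ^ 3 = a ^ 2 * b + b * a * b) :
    a * b * a * b = 2 • a ^ 4 - a ^ 3 * b := by
  have hmul : a * (2 • a ^ 3) = a * (a ^ 2 * b + b * a * b) := congrArg (a * ·) h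
  rw [mul_smul_comm, ← pow_succ'] at hmul
  rw [hmul]
  noncomm_ring

theorem stmt2_general {K : Type*} [Field K] {n : ℕ}
    (a b : Matrix (Fin n) (Fin n) K)
    (h5 : 2 • a ^ 3 = a ^ 2 * b + b * a * b)
    (h7 : a ^ 3 * b = -((1 / 2 : K) • a ^ 4)) :
    a * b * a * b = (5 / 2 : K) • a ^ 4 := by
  calc a * b * a * b = 2 • a ^ 4 - a ^ 3 * b := mul_mul_mul_eq_two_nsmul_pow_four_sub h5
    _ = ((2 : K) + 1 / 2) • a ^ 4 := by
      rw [h7, sub_neg_eq_add, add_smul, ofNat_smul_eq_nsmul (R := K)]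
    _ = (5 / 2 : K) • a ^ 4 := by rw [two_add_one_div_two]

theorem stmt2 {K : Type*} [Field K] [IsAlgClosed K] [CharZero K] {n : ℕ}
    (a b c : Matrix (Fin n) (Fin n) K)
    (h1 : a + b + c = 0)
    (h2 : a ^ 2 + b ^ 2 + c ^ 2 = 0)
    (h3 : a ^ 3 + b ^ 3 + c ^ 3 = 0)
    (h4 : a ^ 2 * b = b * a ^ 2)
    (h5 : 2 • a ^ 3 = a ^ 2 * b + b * a * b)
    (h6 : a ^ 2 * b * a = a ^ 3 * b)
    (h7 : a ^ 3 * b = -((1 / 2 : K) • a ^ 4))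
    (h8 : a ^ 5 = 0) :
    a * b * a * b = (5 / 2 : K) • a ^ 4 :=
  stmt2_general a b h5 h7
end

section
/- Let K be a field of characteristic zero and let a, b, c be 2×2 matrices over K satisfying a+b+c = 0, a²+b²+c² = 0, a³+b³+c³ = 0. Then a, b, c pairwise commute. -/
/-!
By Cayley–Hamilton, `x * x = tr x • x - det x • 1` for 2 × 2 matrices, so each power-sum
equation becomes a relation `r • a + s • b + t • c ∈ K • 1`. Substituting `c = -a - b` and
commuting with `a` and with `b` shows that, if `a` and `b` do not commute, then `r = s = t`.
The quadratic equation thus makes `a`, `b`, `c` traceless, hence `x * x = -det x • 1`; the cubic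
one then makes the determinants equal, and the quadratic one makes them zero since `3 ≠ 0`.
So `a * a = b * b = 0` and `a * b + b * a = 0`: `a` and `b` would span a totally isotropic plane
of the trace form on `sl₂`, whose Witt index is 1. Concretely, every entry of `a * b - b * a`
squares into the ideal generated by these relations, so `a` and `b` commute after all.
-/

open Matrix

theorem eq_zero_and_eq_zero_of_smul_add_smul_eq_smul_one {K A : Type*} [Field K] [Ring A]
    [Algebra K A] {a b : A} (hab : ¬Commute a b) {r s t : K}
    (h : r • a + s • b = t • (1 : A)) : r = 0 ∧ s = 0 := by
  have key : ∀ {x y : A} {p q : K}, ¬Commute x y → p • x + q • y = t • 1 → p = 0 := by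
    intro x y p q hxy hpq
    have hcomm : (p • x + q • y) * y = y * (p • x + q • y) := by
      rw [hpq, smul_one_mul, mul_smul_one]
    have : p • (x * y - y * x) = 0 := by
      simp only [add_mul, mul_add, smul_mul_assoc, mul_smul_comm, add_left_inj] at hcomm
      rw [smul_sub, hcomm, sub_self]
    exact (smul_eq_zero.mp this).resolve_right fun h' => hxy (sub_eq_zero.mp h')
  exact ⟨key hab h, key (fun h' => hab h'.symm) (by rwa [add_comm] at h)⟩

theorem eq_and_eq_of_smul_add_smul_add_smul_eq_smul_one {K A : Type*} [Field K] [Ring A]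
    [Algebra K A] {a b c : A} (habc : a + b + c = 0) (hab : ¬Commute a b) {r s t u : K}
    (h : r • a + s • b + t • c = u • (1 : A)) : r = t ∧ s = t := by
  rw [eq_neg_of_add_eq_zero_right habc] at h
  have := eq_zero_and_eq_zero_of_smul_add_smul_eq_smul_one hab (t := u) (r := r - t) (s := s - t)
    (by rw [← h]; module)
  exact ⟨sub_eq_zero.mp this.1, sub_eq_zero.mp this.2⟩

namespace Matrix

theorem mul_self_fin_two {R : Type*} [CommRing R] [Nontrivial R] (M : Matrix (Fin 2) (Fin 2) R) :
    M * M = M.trace • M - M.det • 1 := by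
  have h := M.aeval_self_charpoly
  rw [charpoly_fin_two] at h
  simp only [map_add, map_sub, map_mul, Polynomial.aeval_X_pow, Polynomial.aeval_X,
    Polynomial.aeval_C, Algebra.algebraMap_eq_smul_one, smul_mul_assoc, one_mul] at h
  rw [← sub_eq_zero, ← h, sq]
  abel

theorem mul_self_eq_neg_det_smul_one_of_trace_eq_zero {R : Type*} [CommRing R] [Nontrivial R]
    {M : Matrix (Fin 2) (Fin 2) R} (hM : M.trace = 0) : M * M = -M.det • 1 := by
  rw [mul_self_fin_two, hM, zero_smul, zero_sub, neg_smul]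

theorem eta_fin_two_of_trace_eq_zero {R : Type*} [CommRing R] {u : Matrix (Fin 2) (Fin 2) R}
    (hu : u.trace = 0) : u = !![u 0 0, u 0 1; u 1 0, -u 0 0] := by
  rw [trace_fin_two] at hu
  rw [← eq_neg_of_add_eq_zero_right hu]
  exact eta_fin_two u

theorem commute_of_mul_self_eq_zero_fin_two {R : Type*} [CommRing R] [IsReduced R]
    {u v : Matrix (Fin 2) (Fin 2) R} (hu : u.trace = 0) (hv : v.trace = 0)
    (huu : u * u = 0) (hvv : v * v = 0) (huv : u * v + v * u = 0) : Commute u v := by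
  obtain ⟨p, q, r, rfl⟩ : ∃ p q r, u = !![p, q; r, -p] :=
    ⟨_, _, _, eta_fin_two_of_trace_eq_zero hu⟩
  obtain ⟨s, t, x, rfl⟩ : ∃ s t x, v = !![s, t; x, -s] :=
    ⟨_, _, _, eta_fin_two_of_trace_eq_zero hv⟩
  have hu₀ : p * p + q * r = 0 := by simpa using congr_fun₂ huu 0 0
  have hv₀ : s * s + t * x = 0 := by simpa using congr_fun₂ hvv 0 0
  have huv₀ : p * s + q * x + (s * p + t * r) = 0 := by simpa using congr_fun₂ huv 0 0
  have h₁ : q * x - r * t = 0 := IsReduced.eq_zero _ ⟨2, by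
    linear_combination
      (q * x + r * t - 2 * p * s) * huv₀ + 4 * s ^ 2 * hu₀ - 4 * q * r * hv₀⟩
  have h₂ : p * t - q * s = 0 := IsReduced.eq_zero _ ⟨2, by
    linear_combination t ^ 2 * hu₀ + q ^ 2 * hv₀ - q * t * huv₀⟩
  have h₃ : r * s - p * x = 0 := IsReduced.eq_zero _ ⟨2, by
    linear_combination x ^ 2 * hu₀ + r ^ 2 * hv₀ - r * x * huv₀⟩
  rw [Commute, SemiconjBy, mul_fin_two, mul_fin_two]
  congrm !![?_, ?_; ?_, ?_]
  · linear_combination h₁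
  · linear_combination 2 * h₂
  · linear_combination 2 * h₃
  · linear_combination -h₁

variable {K : Type*} [Field K] [NeZero (3 : K)] {a b c : Matrix (Fin 2) (Fin 2) K}

theorem trace_eq_zero_of_sum_sq_eq_zero (h1 : a + b + c = 0) (h2 : a ^ 2 + b ^ 2 + c ^ 2 = 0)
    (hab : ¬Commute a b) : a.trace = 0 ∧ b.trace = 0 ∧ c.trace = 0 := by
  rw [sq, sq, sq, mul_self_fin_two, mul_self_fin_two, mul_self_fin_two] at h2
  obtain ⟨hac, hbc⟩ := eq_and_eq_of_smul_add_smul_add_smul_eq_smul_one h1 hab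
    (u := a.det + b.det + c.det) (by rw [← sub_eq_zero, ← h2]; module)
  have htr : a.trace + b.trace + c.trace = 0 := by rw [← trace_add, ← trace_add, h1, trace_zero]
  have hc : c.trace = 0 :=
    (mul_eq_zero.mp (by linear_combination htr - hac - hbc : (3 : K) * c.trace = 0)).resolve_left
      three_ne_zero
  exact ⟨hac.trans hc, hbc.trans hc, hc⟩

theorem mul_self_eq_zero_of_sum_cube_eq_zero (h1 : a + b + c = 0) (h2 : a ^ 2 + b ^ 2 + c ^ 2 = 0)
    (h3 : a ^ 3 + b ^ 3 + c ^ 3 = 0) (hab : ¬Commute a b) :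
    a * a = 0 ∧ b * b = 0 ∧ c * c = 0 := by
  obtain ⟨ha, hb, hc⟩ := trace_eq_zero_of_sum_sq_eq_zero h1 h2 hab
  have ha2 := mul_self_eq_neg_det_smul_one_of_trace_eq_zero ha
  have hb2 := mul_self_eq_neg_det_smul_one_of_trace_eq_zero hb
  have hc2 := mul_self_eq_neg_det_smul_one_of_trace_eq_zero hc
  rw [pow_three, pow_three, pow_three, ha2, hb2, hc2, mul_smul_one, mul_smul_one,
    mul_smul_one] at h3
  rw [sq, sq, sq, ha2, hb2, hc2] at h2
  obtain ⟨hac, hbc⟩ := eq_and_eq_of_smul_add_smul_add_smul_eq_smul_one h1 hab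
    (r := a.det) (s := b.det) (t := c.det) (u := 0)
    (by rw [zero_smul, ← neg_eq_zero, ← h3]; module)
  have hdet : (3 * c.det) • (1 : Matrix (Fin 2) (Fin 2) K) = 0 := by
    rw [← neg_eq_zero, ← h2, hac, hbc]; module
  have hc0 : c.det = 0 :=
    (mul_eq_zero.mp ((smul_eq_zero.mp hdet).resolve_right one_ne_zero)).resolve_left three_ne_zero
  rw [ha2, hb2, hc2, hac, hbc, hc0]
  simp

theorem commute_of_sum_pow_eq_zero (h1 : a + b + c = 0) (h2 : a ^ 2 + b ^ 2 + c ^ 2 = 0)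
    (h3 : a ^ 3 + b ^ 3 + c ^ 3 = 0) : Commute a b := by
  by_contra hab
  obtain ⟨ha, hb, -⟩ := trace_eq_zero_of_sum_sq_eq_zero h1 h2 hab
  obtain ⟨haa, hbb, hcc⟩ := mul_self_eq_zero_of_sum_cube_eq_zero h1 h2 h3 hab
  have hanti : a * b + b * a = 0 := by
    rw [eq_neg_of_add_eq_zero_right h1, neg_mul_neg, add_mul, mul_add, mul_add, haa, hbb] at hcc
    simpa using hcc
  exact hab (commute_of_mul_self_eq_zero_fin_two ha hb haa hbb hanti)

end Matrix

theorem stmt4 {K : Type*} [Field K] [CharZero K]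
    (a b c : Matrix (Fin 2) (Fin 2) K)
    (h1 : a + b + c = 0)
    (h2 : a ^ 2 + b ^ 2 + c ^ 2 = 0)
    (h3 : a ^ 3 + b ^ 3 + c ^ 3 = 0) :
    a * b = b * a ∧ a * c = c * a ∧ b * c = c * b := by
  have hab := commute_of_sum_pow_eq_zero h1 h2 h3
  obtain rfl := eq_neg_of_add_eq_zero_right h1
  exact ⟨hab, ((Commute.refl a).add_right hab).neg_right,
    (hab.symm.add_right (Commute.refl b)).neg_right⟩
end

section
/- Over an algebraically closed field K of characteristic zero, there exist 3×3 matrices a, b, c with a+b+c = 0, a²+b²+c² = 0, a³+b³+c³ = 0 such that ab ≠ ba. Specifically, take a = J₃ (the 3×3 nilpotent Jordan block), b the strictly upper triangular matrix with b₁₂ = x, b₁₃ = y, b₂₃ = (-2-x)/(2x+1) for any x with 2x+1 ≠ 0 and x²+x+1 ≠ 0, and c = -a - b. -/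
/-!
Write `N(p, q, r)` for the strictly upper triangular matrix with entries `p, q, r` at `(0,1), (0,2),
(1,2)`. Then `N(p, q, r) * N(p', q', r') = N(0, p r', 0)`, so every cube of such a matrix vanishes.
With `a = N(1, 0, 1)`, `b = N(x, y, e)` and `c = N(-1 - x, -y, -1 - e)`, the sum of squares is
`N(0, 2 + x + e (2x + 1), 0)`, which is zero by the choice of `e`, while `a b` and `b a` have
corners `e` and `x`; these differ because `e = x` would give `2 (x² + x + 1) = 0`.
-/

namespace Matrix

variable {R : Type*}

def strictUpper3 [Zero R] (p q r : R) : Matrix (Fin 3) (Fin 3) R :=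
  !![0, p, q; 0, 0, r; 0, 0, 0]

theorem strictUpper3_inj [Zero R] {p q r p' q' r' : R} :
    strictUpper3 p q r = strictUpper3 p' q' r' ↔ p = p' ∧ q = q' ∧ r = r' := by
  simp only [strictUpper3, ← Matrix.ext_iff, Fin.forall_fin_succ]
  simp [and_assoc]

@[simp]
theorem strictUpper3_zero [Zero R] : strictUpper3 (0 : R) 0 0 = 0 := by
  ext i j
  fin_cases i <;> fin_cases j <;> rfl

theorem strictUpper3_add [AddZeroClass R] (p q r p' q' r' : R) :
    strictUpper3 p q r + strictUpper3 p' q' r' = strictUpper3 (p + p') (q + q') (r + r') := by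
  simp [strictUpper3]

theorem strictUpper3_neg [NegZeroClass R] (p q r : R) :
    -strictUpper3 p q r = strictUpper3 (-p) (-q) (-r) := by
  simp [strictUpper3]

theorem strictUpper3_mul [NonUnitalNonAssocSemiring R] (p q r p' q' r' : R) :
    strictUpper3 p q r * strictUpper3 p' q' r' = strictUpper3 0 (p * r') 0 := by
  ext i j
  fin_cases i <;> fin_cases j <;> simp [strictUpper3, Matrix.mul_apply, Fin.sum_univ_three]

theorem strictUpper3_pow_three [Semiring R] (p q r : R) : strictUpper3 p q r ^ 3 = 0 := by
  simp [pow_succ, strictUpper3_mul]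

end Matrix

open Matrix

theorem stmt5_general {K : Type*} [Field K] [CharZero K]
    (x y : K) (hx1 : 2 * x + 1 ≠ 0) (hx2 : x ^ 2 + x + 1 ≠ 0)
    (a b c : Matrix (Fin 3) (Fin 3) K)
    (ha : a = !![0, 1, 0; 0, 0, 1; 0, 0, 0])
    (hb : b = !![0, x, y; 0, 0, (-2 - x) / (2 * x + 1); 0, 0, 0])
    (hc : c = -a - b) :
    a + b + c = 0 ∧ a ^ 2 + b ^ 2 + c ^ 2 = 0 ∧ a ^ 3 + b ^ 3 + c ^ 3 = 0 ∧
      a * b ≠ b * a := by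
  set e := (-2 - x) / (2 * x + 1)
  have he : e * (2 * x + 1) = -2 - x := div_mul_cancel₀ _ hx1
  clear_value e
  replace ha : a = strictUpper3 1 0 1 := ha
  replace hb : b = strictUpper3 x y e := hb
  replace hc : c = strictUpper3 (-1 - x) (-y) (-1 - e) := by
    rw [hc, ha, hb, sub_eq_add_neg, strictUpper3_neg, strictUpper3_neg, strictUpper3_add]
    congr 1 <;> ring
  subst ha hb hc
  refine ⟨?_, ?_, by simp only [strictUpper3_pow_three, add_zero], ?_⟩
  · rw [strictUpper3_add, strictUpper3_add, ← strictUpper3_zero, strictUpper3_inj]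
    refine ⟨?_, ?_, ?_⟩ <;> ring
  · rw [sq, sq, sq, strictUpper3_mul, strictUpper3_mul, strictUpper3_mul, strictUpper3_add,
      strictUpper3_add, ← strictUpper3_zero, strictUpper3_inj]
    refine ⟨by ring, by linear_combination he, by ring⟩
  · rw [strictUpper3_mul, strictUpper3_mul, Ne, strictUpper3_inj]
    rintro ⟨-, hex, -⟩
    have h2 : (2 : K) * (x ^ 2 + x + 1) = 0 := by linear_combination he - (2 * x + 1) * hex
    exact hx2 ((mul_eq_zero.mp h2).resolve_left two_ne_zero)

theorem stmt5 {K : Type*} [Field K] [IsAlgClosed K] [CharZero K]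
    (x y : K) (hx1 : 2 * x + 1 ≠ 0) (hx2 : x ^ 2 + x + 1 ≠ 0)
    (a b c : Matrix (Fin 3) (Fin 3) K)
    (ha : a = !![0, 1, 0; 0, 0, 1; 0, 0, 0])
    (hb : b = !![0, x, y; 0, 0, (-2 - x) / (2 * x + 1); 0, 0, 0])
    (hc : c = -a - b) :
    a + b + c = 0 ∧ a ^ 2 + b ^ 2 + c ^ 2 = 0 ∧ a ^ 3 + b ^ 3 + c ^ 3 = 0 ∧
      a * b ≠ b * a :=
  stmt5_general x y hx1 hx2 a b c ha hb hc
end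

section
/- Let u be a real number, v a non-real complex number, and w its complex conjugate. Suppose a, b, c are real n×n matrices and p is an invertible complex n×n matrix such that p⁻¹ap, p⁻¹bp, p⁻¹cp are diagonal with, for each index i, the triple of i-th diagonal entries being a permutation of (u, v, w). Then n is even. -/
/-! The alternating polynomial `V(x, y, z) = (x - y)(y - z)(z - x)` only changes by the sign of a
permutation of its arguments, so on the `i`-th diagonal entries of `A, B, C` it equals `εᵢ Δ` with
`εᵢ = ±1` and `Δ = V(u, v, v̄)`, whose imaginary part is nonzero. Summing over `i` gives the trace of
`V(A, B, C) = p⁻¹ V(a, b, c) p`, which is real; hence `∑ εᵢ = 0`, forcing `n` to be even. -/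

open Matrix

def vandermonde3 {R : Type*} [Ring R] (x y z : R) : R := (x - y) * (y - z) * (z - x)

theorem map_vandermonde3 {R S F : Type*} [Ring R] [Ring S] [FunLike F R S] [RingHomClass F R S]
    (f : F) (x y z : R) : f (vandermonde3 x y z) = vandermonde3 (f x) (f y) (f z) := by
  simp only [vandermonde3, map_mul, map_sub]

theorem vandermonde3_conj {n R : Type*} [Fintype n] [DecidableEq n] [CommRing R]
    {p : Matrix n n R} (hp : IsUnit p.det) (M N K : Matrix n n R) :
    vandermonde3 (p⁻¹ * M * p) (p⁻¹ * N * p) (p⁻¹ * K * p) = p⁻¹ * vandermonde3 M N K * p := by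
  simp only [vandermonde3, ← Matrix.mul_sub, ← Matrix.sub_mul, Matrix.mul_assoc,
    Matrix.mul_nonsing_inv_cancel_left _ _ hp]

theorem trace_vandermonde3_of_isDiag {n R : Type*} [Fintype n] [DecidableEq n] [CommRing R]
    {A B C : Matrix n n R} (hA : A.IsDiag) (hB : B.IsDiag) (hC : C.IsDiag) :
    (vandermonde3 A B C).trace = ∑ i, vandermonde3 (A i i) (B i i) (C i i) := by
  rw [← hA.diagonal_diag, ← hB.diagonal_diag, ← hC.diagonal_diag]
  simp [vandermonde3, diagonal_sub, trace_diagonal]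

theorem vandermonde3_eq_units_mul_of_multiset_eq {R : Type*} [CommRing R] {x y z u v w : R}
    (h : ({x, y, z} : Multiset R) = {u, v, w}) :
    ∃ ε : ℤˣ, vandermonde3 x y z = ((ε : ℤ) : R) * vandermonde3 u v w := by
  have hperm : [x, y, z] ∈ [u, v, w].permutations := by
    rw [List.mem_permutations, ← Multiset.coe_eq_coe]
    exact h
  simp only [List.permutations, List.permutationsAux, List.foldr_cons, List.permutationsAux.rec,
    List.foldr_nil, List.permutationsAux2_snd_nil, List.permutationsAux2_snd_cons, List.append_nil,
    id_eq, List.cons_append, List.nil_append, List.mem_cons, List.cons.injEq, and_true,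
    List.not_mem_nil, or_false] at hperm
  rcases hperm with ⟨rfl, rfl, rfl⟩ | ⟨rfl, rfl, rfl⟩ | ⟨rfl, rfl, rfl⟩ | ⟨rfl, rfl, rfl⟩ |
    ⟨rfl, rfl, rfl⟩ | ⟨rfl, rfl, rfl⟩
  all_goals first
    | exact ⟨1, by simp only [vandermonde3]; push_cast; ring1⟩
    | exact ⟨-1, by simp only [vandermonde3]; push_cast; ring1⟩

theorem im_vandermonde3_ofReal_conj_ne_zero (u : ℝ) {v : ℂ} (hv : v.im ≠ 0) :
    (vandermonde3 (u : ℂ) v (starRingEnd ℂ v)).im ≠ 0 := by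
  have him : (vandermonde3 (u : ℂ) v (starRingEnd ℂ v)).im
      = -2 * v.im * ((u - v.re) ^ 2 + v.im ^ 2) := by
    simp [vandermonde3, Complex.mul_im, Complex.mul_re]
    ring
  rw [him]
  have : 0 < (u - v.re) ^ 2 + v.im ^ 2 := by positivity
  exact mul_ne_zero (mul_ne_zero (by norm_num) hv) this.ne'

theorem im_trace_conj_map_ofReal {n : Type*} [Fintype n] [DecidableEq n]
    {p : Matrix n n ℂ} (hp : IsUnit p.det) (M : Matrix n n ℝ) :
    (p⁻¹ * M.map Complex.ofReal * p).trace.im = 0 := by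
  rw [trace_conj' ((isUnit_iff_isUnit_det p).mpr hp)]
  simp [Matrix.trace, Complex.im_sum]

theorem even_card_of_sum_units_eq_zero {ι : Type*} [Fintype ι] {ε : ι → ℤˣ}
    (hε : ∑ i, (ε i : ℤ) = 0) : Even (Fintype.card ι) := by
  rw [← ZMod.natCast_eq_zero_iff_even]
  have hodd : ∀ i, ((ε i : ℤ) : ZMod 2) = 1 := fun i => by
    rcases Int.units_eq_one_or (ε i) with h | h <;> simp [h]
  calc (Fintype.card ι : ZMod 2) = ∑ i, ((ε i : ℤ) : ZMod 2) := by simp [hodd]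
    _ = 0 := by rw [← Int.cast_sum, hε, Int.cast_zero]

theorem stmt8 {n : ℕ} (u : ℝ) (v : ℂ) (hv : v.im ≠ 0)
    (a b c : Matrix (Fin n) (Fin n) ℝ)
    (p : Matrix (Fin n) (Fin n) ℂ) (hp : IsUnit p.det)
    (A B C : Matrix (Fin n) (Fin n) ℂ)
    (hA : A = p⁻¹ * a.map (Complex.ofReal) * p)
    (hB : B = p⁻¹ * b.map (Complex.ofReal) * p)
    (hC : C = p⁻¹ * c.map (Complex.ofReal) * p)
    (hAd : A.IsDiag) (hBd : B.IsDiag) (hCd : C.IsDiag)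
    (hperm : ∀ i : Fin n,
      ({A i i, B i i, C i i} : Multiset ℂ) =
        {(u : ℂ), v, (starRingEnd ℂ) v}) :
    Even n := by
  set Δ := vandermonde3 (u : ℂ) v (starRingEnd ℂ v)
  choose ε hε using fun i => vandermonde3_eq_units_mul_of_multiset_eq (hperm i)
  have hsum : (vandermonde3 A B C).trace = ((∑ i, (ε i : ℤ) : ℤ) : ℂ) * Δ := by
    rw [trace_vandermonde3_of_isDiag hAd hBd hCd, Int.cast_sum, Finset.sum_mul]
    exact Finset.sum_congr rfl fun i _ => hε i
  have hreal : (vandermonde3 A B C).trace.im = 0 := by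
    have hmap : vandermonde3 (a.map Complex.ofReal) (b.map Complex.ofReal) (c.map Complex.ofReal)
        = (vandermonde3 a b c).map Complex.ofReal :=
      (map_vandermonde3 Complex.ofRealHom.mapMatrix a b c).symm
    rw [hA, hB, hC, vandermonde3_conj hp, hmap]
    exact im_trace_conj_map_ofReal hp _
  have hzero : ((∑ i, (ε i : ℤ) : ℤ) : ℝ) * Δ.im = 0 := by
    simpa [hsum] using hreal
  have hε0 : ∑ i, (ε i : ℤ) = 0 := by
    exact_mod_cast (mul_eq_zero.mp hzero).resolve_right (im_vandermonde3_ofReal_conj_ne_zero u hv)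
  simpa using even_card_of_sum_units_eq_zero hε0
end

section
/- Suppose r(x) = 6x³ - 6αx² + (3α²-3β)x + 3αβ - 2γ - α³ (for real α, β, γ) has exactly one real root. Then for every even n, the system a+b+c = αI, a²+b²+c² = βI, a³+b³+c³ = γI has a solution in real n×n matrices: if u is the real root and v ± iw the complex roots, then for n = 2, a = uI₂, b = [[v, w],[-w, v]], c = [[v, -w],[w, v]] works, and Kronecker products with I_{n/2} give solutions for all even n. -/
theorem stmt10 (α β γ u v w : ℝ) (hw : w ≠ 0)
    (hroots : ∀ x : ℂ,
      6 * x ^ 3 - 6 * (α : ℂ) * x ^ 2 + (3 * (α : ℂ) ^ 2 - 3 * β) * x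
          + (3 * (α : ℂ) * β - 2 * γ - (α : ℂ) ^ 3)
        = 6 * (x - u) * (x - ((v : ℂ) + w * Complex.I))
            * (x - ((v : ℂ) - w * Complex.I))) :
    (∀ a b c : Matrix (Fin 2) (Fin 2) ℝ,
      a = u • (1 : Matrix (Fin 2) (Fin 2) ℝ) →
      b = !![v, w; -w, v] → c = !![v, -w; w, v] →
      a + b + c = α • (1 : Matrix (Fin 2) (Fin 2) ℝ) ∧
      a ^ 2 + b ^ 2 + c ^ 2 = β • (1 : Matrix (Fin 2) (Fin 2) ℝ) ∧
      a ^ 3 + b ^ 3 + c ^ 3 = γ • (1 : Matrix (Fin 2) (Fin 2) ℝ)) ∧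
    (∀ n : ℕ, Even n →
      ∃ a b c : Matrix (Fin n) (Fin n) ℝ,
        a + b + c = α • (1 : Matrix (Fin n) (Fin n) ℝ) ∧
        a ^ 2 + b ^ 2 + c ^ 2 = β • (1 : Matrix (Fin n) (Fin n) ℝ) ∧
        a ^ 3 + b ^ 3 + c ^ 3 = γ • (1 : Matrix (Fin n) (Fin n) ℝ)) := by
  have h0 := hroots 0
  have h1 := hroots 1
  have hm := hroots (-1)
  have eα : (α : ℂ) = u + 2 * v := by
    have hI := Complex.I_sq
    linear_combination (-1/12) * h1 + (-1/12) * hm + (1/6) * h0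
  have eβ : (β : ℂ) = u ^ 2 + 2 * v ^ 2 - 2 * w ^ 2 := by
    have hI := Complex.I_sq
    linear_combination (-1/6) * h1 + (1/6) * hm + ((α : ℂ) + u + 2 * v) * eα
      + 2 * hI * ((w:ℂ)^2)
  have eγ : (γ : ℂ) = u ^ 3 + 2 * v ^ 3 - 6 * v * w ^ 2 := by
    have hI := Complex.I_sq
    linear_combination (-1/2) * h0
      + ((3 * ((u:ℂ) ^ 2 + 2 * v ^ 2 - 2 * w ^ 2) - ((α:ℂ) ^ 2 + α * (u + 2 * v) + ((u:ℂ) + 2 * v) ^ 2)) / 2) * eα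
      + (3 * (α:ℂ) / 2) * eβ + (-3) * (u:ℂ) * (w:ℂ)^2 * hI
  have rα : α = u + 2 * v := by exact_mod_cast eα
  have rβ : β = u ^ 2 + 2 * v ^ 2 - 2 * w ^ 2 := by exact_mod_cast eβ
  have rγ : γ = u ^ 3 + 2 * v ^ 3 - 6 * v * w ^ 2 := by exact_mod_cast eγ
  have key : (u • (1 : Matrix (Fin 2) (Fin 2) ℝ)) + !![v, w; -w, v] + !![v, -w; w, v]
        = α • (1 : Matrix (Fin 2) (Fin 2) ℝ) ∧
      (u • (1 : Matrix (Fin 2) (Fin 2) ℝ)) ^ 2 + !![v, w; -w, v] ^ 2 + !![v, -w; w, v] ^ 2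
        = β • (1 : Matrix (Fin 2) (Fin 2) ℝ) ∧
      (u • (1 : Matrix (Fin 2) (Fin 2) ℝ)) ^ 3 + !![v, w; -w, v] ^ 3 + !![v, -w; w, v] ^ 3
        = γ • (1 : Matrix (Fin 2) (Fin 2) ℝ) := by
    refine ⟨?_, ?_, ?_⟩ <;>
      · ext i j
        fin_cases i <;> fin_cases j <;>
          simp [pow_succ, Matrix.mul_apply, Fin.sum_univ_two, Matrix.one_apply, rα, rβ, rγ] <;>
          ring
  constructor
  · rintro a b c rfl rfl rfl
    exact key
  · rintro n ⟨m, rfl⟩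
    let e : Fin 2 × Fin m ≃ Fin (m + m) := finProdFinEquiv.trans (finCongr (by ring))
    let F : Matrix (Fin 2) (Fin 2) ℝ → Matrix (Fin (m + m)) (Fin (m + m)) ℝ := fun M =>
      Matrix.reindexAlgEquiv ℝ ℝ e (Matrix.blockDiagonal fun _ : Fin m => M)
    have hadd : ∀ X Y : Matrix (Fin 2) (Fin 2) ℝ, F (X + Y) = F X + F Y := by
      intro X Y
      show Matrix.reindexAlgEquiv ℝ ℝ e (Matrix.blockDiagonal ((fun _ : Fin m => X) + fun _ => Y)) = _
      rw [Matrix.blockDiagonal_add, map_add]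
    have hpow : ∀ (X : Matrix (Fin 2) (Fin 2) ℝ) (k : ℕ), F (X ^ k) = F X ^ k := by
      intro X k
      show Matrix.reindexAlgEquiv ℝ ℝ e (Matrix.blockDiagonal ((fun _ : Fin m => X) ^ k)) = _
      rw [Matrix.blockDiagonal_pow, map_pow]
    have hsmul : ∀ (r : ℝ) (X : Matrix (Fin 2) (Fin 2) ℝ), F (r • X) = r • F X := by
      intro r X
      show Matrix.reindexAlgEquiv ℝ ℝ e (Matrix.blockDiagonal (r • fun _ : Fin m => X)) = _
      rw [Matrix.blockDiagonal_smul, map_smul]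
    have hone : F 1 = 1 := by
      show Matrix.reindexAlgEquiv ℝ ℝ e (Matrix.blockDiagonal (1 : Fin m → Matrix (Fin 2) (Fin 2) ℝ)) = _
      rw [Matrix.blockDiagonal_one, map_one]
    refine ⟨F (u • 1), F !![v, w; -w, v], F !![v, -w; w, v], ?_, ?_, ?_⟩
    · rw [← hadd, ← hadd, key.1, hsmul, hone]
    · rw [← hpow, ← hpow, ← hpow, ← hadd, ← hadd, key.2.1, hsmul, hone]
    · rw [← hpow, ← hpow, ← hpow, ← hadd, ← hadd, key.2.2, hsmul, hone]
end

section
/- Let a and b be 2×2 complex matrices with a = √(σ/3)·diag(1, -1) and b = √(σ/3)·[[-1/2, √3/2],[√3/2, 1/2]] for σ ≠ 0, and c = -a - b. Then a+b+c = 0, a²+b²+c² = σI₂, a³+b³+c³ = 0, and (ab - ba)² = -σ²/3·I₂ ≠ 0, so a, b, c are not simultaneously triangularizable. -/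
/-!
Both `a` and `b` are `s` times a reflection of `ℂ²`, the two reflection axes meeting at angle
`π/3`; hence `a² = b² = s² • 1` and `ab + ba = -s² • 1`, and the identities for `a + b + c`,
the power sums and `(ab - ba)²` follow from these three relations in any algebra. In particular
`(ab - ba)²` is a nonzero scalar, so `ab - ba` is not nilpotent, whereas the commutator of two
upper triangular matrices has zero diagonal and is therefore nilpotent, and nilpotency is
invariant under conjugation.
-/

open Matrix

section ReflectionPair

variable {R A : Type*} [CommRing R] [Ring A] [Algebra R A] {a b : A} {r : R}

theorem sq_add_sq_add_neg_sub_sq (ha : a ^ 2 = r • 1) (hb : b ^ 2 = r • 1)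
    (hab : a * b + b * a = -(r • 1)) : a ^ 2 + b ^ 2 + (-a - b) ^ 2 = (3 * r) • 1 := by
  have : (-a - b) ^ 2 = a ^ 2 + b ^ 2 + (a * b + b * a) := by noncomm_ring
  rw [this, ha, hb, hab]
  module

theorem pow_three_add_pow_three_add_neg_sub_pow_three (ha : a ^ 2 = r • 1) (hb : b ^ 2 = r • 1)
    (hab : a * b + b * a = -(r • 1)) : a ^ 3 + b ^ 3 + (-a - b) ^ 3 = 0 := by
  have : a ^ 3 + b ^ 3 + (-a - b) ^ 3 = -(a * b ^ 2 + b * a ^ 2 + (a + b) * (a * b + b * a)) := by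
    noncomm_ring
  rw [this, ha, hb, hab]
  simp only [mul_neg, mul_smul_comm, mul_one]
  module

theorem commutator_sq (ha : a ^ 2 = r • 1) (hb : b ^ 2 = r • 1)
    (hab : a * b + b * a = -(r • 1)) : (a * b - b * a) ^ 2 = (-3 * r ^ 2) • 1 := by
  have : (a * b - b * a) ^ 2 = (a * b + b * a) ^ 2 - 2 • (a * b ^ 2 * a + b * a ^ 2 * b) := by
    noncomm_ring
  rw [this, hab, hb, ha]
  simp only [neg_sq, _root_.smul_pow, one_pow, mul_smul_comm, smul_mul_assoc, mul_one, ← sq, ha,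
    hb, smul_smul]
  module

end ReflectionPair

theorem not_isNilpotent_of_sq_eq_smul_one {K A : Type*} [Field K] [Ring A] [Nontrivial A]
    [Algebra K A] {x : A} {k : K} (hk : k ≠ 0) (hx : x ^ 2 = k • 1) : ¬IsNilpotent x := by
  intro h
  refine (h.pow_succ 1).not_isUnit ?_
  rw [hx, ← Algebra.algebraMap_eq_smul_one]
  exact hk.isUnit.map _

theorem Units.isNilpotent_conj_iff {M : Type*} [MonoidWithZero M] (u : Mˣ) (x : M) :
    IsNilpotent (↑u⁻¹ * x * ↑u) ↔ IsNilpotent x := by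
  simp only [IsNilpotent, Units.conj_pow', Units.mul_left_eq_zero, Units.mul_right_eq_zero]

namespace Matrix

variable {n R : Type*} [Fintype n] [LinearOrder n] [CommRing R] {M N : Matrix n n R}

theorem IsUpperTriangular.mul_apply_self (hM : M.IsUpperTriangular) (hN : N.IsUpperTriangular)
    (i : n) : (M * N) i i = M i i * N i i := by
  rw [mul_apply, Finset.sum_eq_single i]
  · intro k _ hki
    rcases hki.lt_or_gt with hk | hk
    · rw [hM hk, zero_mul]
    · rw [hN hk, mul_zero]
  · simp

theorem IsUpperTriangular.isNilpotent_of_diag_eq_zero (hM : M.IsUpperTriangular)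
    (hd : ∀ i, M i i = 0) : IsNilpotent M :=
  ⟨Fintype.card n, by simpa [charpoly_of_isUpperTriangular M hM, hd] using aeval_self_charpoly M⟩

theorem IsUpperTriangular.isNilpotent_commutator (hM : M.IsUpperTriangular)
    (hN : N.IsUpperTriangular) : IsNilpotent (M * N - N * M) :=
  IsUpperTriangular.isNilpotent_of_diag_eq_zero ((hM.mul hN).sub (hN.mul hM)) fun i => by
    rw [sub_apply, hM.mul_apply_self hN, hN.mul_apply_self hM, mul_comm, sub_self]

theorem isNilpotent_commutator_of_isUpperTriangular_conj {P : Matrix n n R} (hP : IsUnit P.det)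
    (hM : (P⁻¹ * M * P).IsUpperTriangular) (hN : (P⁻¹ * N * P).IsUpperTriangular) :
    IsNilpotent (M * N - N * M) := by
  have hconj : P⁻¹ * (M * N - N * M) * P =
      P⁻¹ * M * P * (P⁻¹ * N * P) - P⁻¹ * N * P * (P⁻¹ * M * P) := by
    simp only [mul_sub, sub_mul, Matrix.mul_assoc, mul_nonsing_inv_cancel_left _ _ hP]
  refine (Units.isNilpotent_conj_iff (P.nonsingInvUnit hP) _).mp ?_
  change IsNilpotent (P⁻¹ * (M * N - N * M) * P)
  rw [hconj]
  exact hM.isNilpotent_commutator hN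

end Matrix

theorem smul_reflections_sq_and_anticomm {K : Type*} [Field K] [NeZero (2 : K)] {s t : K}
    (ht : t ^ 2 = 3) {a b : Matrix (Fin 2) (Fin 2) K} (ha : a = s • !![1, 0; 0, -1])
    (hb : b = s • !![-(1 / 2), t / 2; t / 2, 1 / 2]) :
    a ^ 2 = s ^ 2 • 1 ∧ b ^ 2 = s ^ 2 • 1 ∧ a * b + b * a = -(s ^ 2 • 1) := by
  subst ha hb
  rw [_root_.smul_pow, _root_.smul_pow, smul_mul_smul_comm, smul_mul_smul_comm, ← smul_add,
    ← sq, ← smul_neg]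
  refine ⟨congrArg _ ?_, congrArg _ ?_, congrArg _ ?_⟩ <;>
    ext i j <;> fin_cases i <;> fin_cases j <;> simp [sq] <;> field_simp <;> norm_num [ht]

theorem stmt11 (σ s t : ℂ) (hσ : σ ≠ 0) (hs : s ^ 2 = σ / 3) (ht : t ^ 2 = 3)
    (a b c : Matrix (Fin 2) (Fin 2) ℂ)
    (ha : a = s • !![1, 0; 0, -1])
    (hb : b = s • !![-(1 / 2), t / 2; t / 2, 1 / 2])
    (hc : c = -a - b) :
    a + b + c = 0 ∧
    a ^ 2 + b ^ 2 + c ^ 2 = σ • (1 : Matrix (Fin 2) (Fin 2) ℂ) ∧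
    a ^ 3 + b ^ 3 + c ^ 3 = 0 ∧
    (a * b - b * a) ^ 2 = (-(σ ^ 2) / 3) • (1 : Matrix (Fin 2) (Fin 2) ℂ) ∧
    (a * b - b * a) ^ 2 ≠ 0 ∧
    ¬ ∃ P : Matrix (Fin 2) (Fin 2) ℂ, IsUnit P.det ∧
      ∀ m ∈ ({a, b, c} : Set (Matrix (Fin 2) (Fin 2) ℂ)),
        ∀ i j : Fin 2, j < i → (P⁻¹ * m * P) i j = 0 := by
  obtain rfl : σ = 3 * s ^ 2 := by rw [hs]; ring
  obtain ⟨ha2, hb2, hab⟩ := smul_reflections_sq_and_anticomm ht ha hb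
  have hk : -((3 * s ^ 2) ^ 2) / 3 ≠ 0 := by simpa using hσ
  have hcomm : (a * b - b * a) ^ 2 = (-((3 * s ^ 2) ^ 2) / 3) • 1 := by
    rw [commutator_sq ha2 hb2 hab]
    congr 1
    ring
  subst hc
  refine ⟨by abel, sq_add_sq_add_neg_sub_sq ha2 hb2 hab,
    pow_three_add_pow_three_add_neg_sub_pow_three ha2 hb2 hab, hcomm,
    hcomm ▸ smul_ne_zero hk one_ne_zero, ?_⟩
  rintro ⟨P, hP, htri⟩
  exact not_isNilpotent_of_sq_eq_smul_one hk hcomm <|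
    isNilpotent_commutator_of_isUpperTriangular_conj hP (htri a (by simp)) (htri b (by simp))
end

section
/- Let K be a field of characteristic zero and let a, b be n×n matrices over K satisfying ab + ba = I and ba²b = 0. Then ab and ba are idempotent, trace(ab) = n/2, so n is even. -/
/-!
Since `a * b = 1 - b * a`, the relation `b * a ^ 2 * b = 0` says `(b * a) * (1 - b * a) = 0`,
so `b * a` and its complement `a * b` are idempotent. The trace of an idempotent matrix is its
rank, while `trace (a * b) = trace (b * a)` and their sum is `n`; hence `n = 2 * rank (a * b)`.
-/

open Matrix

theorem Matrix.trace_eq_rank_of_isIdempotentElem {m K : Type*} [Fintype m] [DecidableEq m]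
    [Field K] {P : Matrix m m K} (hP : IsIdempotentElem P) : P.trace = P.rank := by
  have hlin : IsIdempotentElem (toLin' P) := hP.map toLinAlgEquiv'
  rw [← trace_toLin'_eq, ((LinearMap.isProj_range_iff_isIdempotentElem _).mpr hlin).trace]
  rfl

theorem isIdempotentElem_mul_of_add_eq_one {R : Type*} [Ring R] {a b : R}
    (h1 : a * b + b * a = 1) (h2 : b * a ^ 2 * b = 0) : IsIdempotentElem (b * a) := by
  rw [isIdempotentElem_iff_mul_one_sub_self, ← eq_sub_of_add_eq h1]
  calc b * a * (a * b) = b * a ^ 2 * b := by noncomm_ring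
    _ = 0 := h2

theorem Matrix.two_mul_trace_mul_eq_card_of_add_eq_one {m R : Type*} [Fintype m] [DecidableEq m]
    [CommRing R] {a b : Matrix m m R} (h : a * b + b * a = 1) :
    2 * (a * b).trace = Fintype.card m := by
  rw [two_mul]
  nth_rw 2 [trace_mul_comm]
  rw [← trace_add, h, trace_one]

theorem stmt13 {K : Type*} [Field K] [CharZero K] {n : ℕ}
    (a b : Matrix (Fin n) (Fin n) K)
    (h1 : a * b + b * a = 1)
    (h2 : b * a ^ 2 * b = 0) :
    (a * b) * (a * b) = a * b ∧ (b * a) * (b * a) = b * a ∧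
    (a * b).trace = (n : K) / 2 ∧ Even n := by
  have hba : IsIdempotentElem (b * a) := isIdempotentElem_mul_of_add_eq_one h1 h2
  have hab : IsIdempotentElem (a * b) := by
    rw [eq_sub_of_add_eq h1]
    exact hba.one_sub
  have htrace : 2 * (a * b).trace = n := by
    simpa using two_mul_trace_mul_eq_card_of_add_eq_one h1
  refine ⟨hab.eq, hba.eq, by rw [eq_div_iff two_ne_zero]; linear_combination htrace, ?_⟩
  rw [trace_eq_rank_of_isIdempotentElem hab] at htrace
  exact ⟨(a * b).rank, by rw [← two_mul]; exact_mod_cast htrace.symm⟩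
end

section
/- There exist nilpotent 4×4 complex matrices a, b, c with a+b+c = 0, a²+b²+c² = 0, a³+b³+c³ = 0, such that a and b are similar (both similar to the Jordan block J₄) but c is not similar to a (c is similar to diag(J₂, J₂)). -/
/-!
Take `a = J₄` and explicit `b`, `c = -(a + b)`; the power-sum identities and the conjugations
`b ~ J₄`, `c ~ diag(J₂, J₂)` are finite computations. The matrix `c` is not similar to `a` since
`c² = 0` while `J₄² ≠ 0`, and conjugation preserves the vanishing of a power.
-/

namespace Matrix

variable {n R : Type*} [Fintype n] [DecidableEq n] [CommRing R]

theorem eq_mul_mul_nonsing_inv_of_mul_eq {A B P : Matrix n n R} (hP : IsUnit P.det)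
    (h : B * P = P * A) : B = P * A * P⁻¹ := by
  rw [← h, mul_nonsing_inv_cancel_right _ _ hP]

theorem not_exists_conj_of_pow_eq_zero {A C : Matrix n n R} {k : ℕ} (hC : C ^ k = 0)
    (hA : A ^ k ≠ 0) : ¬ ∃ P : Matrix n n R, IsUnit P.det ∧ C = P * A * P⁻¹ := by
  rintro ⟨P, hP, rfl⟩
  let u := nonsingInvUnit P hP
  have hconj : (P * A * P⁻¹) ^ k = P * A ^ k * P⁻¹ := Units.conj_pow u A k
  rw [hconj] at hC
  exact hA (u.mul_right_eq_zero.mp (u⁻¹.mul_left_eq_zero.mp hC))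

end Matrix

namespace NilpotentPowerSums

open Matrix

noncomputable def jordanFour : Matrix (Fin 4) (Fin 4) ℂ :=
  !![0,1,0,0; 0,0,1,0; 0,0,0,1; 0,0,0,0]

noncomputable def jordanTwoTwo : Matrix (Fin 4) (Fin 4) ℂ :=
  !![0,1,0,0; 0,0,0,0; 0,0,0,1; 0,0,0,0]

noncomputable def witnessB : Matrix (Fin 4) (Fin 4) ℂ :=
  !![0,1,-1,-1; 0,0,-1,1; 0,0,0,1; 0,0,0,0]

noncomputable def witnessC : Matrix (Fin 4) (Fin 4) ℂ :=
  !![0,-2,1,1; 0,0,0,-1; 0,0,0,-2; 0,0,0,0]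

noncomputable def intertwinerB : Matrix (Fin 4) (Fin 4) ℂ :=
  !![-1,0,-1,0; 0,-1,1,0; 0,0,1,0; 0,0,0,1]

noncomputable def intertwinerC : Matrix (Fin 4) (Fin 4) ℂ :=
  !![1,0,-2,0; -1,0,0,1; -2,0,0,0; 0,1,0,0]

theorem jordanFour_pow_four : jordanFour ^ 4 = 0 := by
  norm_num [jordanFour, pow_succ, ← ext_iff, Fin.forall_fin_succ]

theorem jordanFour_sq_ne_zero : jordanFour ^ 2 ≠ 0 := by
  norm_num [jordanFour, pow_succ, ← ext_iff, Fin.forall_fin_succ]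

theorem witnessB_pow_four : witnessB ^ 4 = 0 := by
  norm_num [witnessB, pow_succ, ← ext_iff, Fin.forall_fin_succ]

theorem witnessC_sq : witnessC ^ 2 = 0 := by
  norm_num [witnessC, pow_succ, ← ext_iff, Fin.forall_fin_succ]

theorem sum_eq_zero : jordanFour + witnessB + witnessC = 0 := by
  norm_num [jordanFour, witnessB, witnessC, ← ext_iff, Fin.forall_fin_succ]

theorem sq_sum_eq_zero : jordanFour ^ 2 + witnessB ^ 2 + witnessC ^ 2 = 0 := by
  norm_num [jordanFour, witnessB, witnessC, pow_succ, ← ext_iff, Fin.forall_fin_succ]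

theorem cube_sum_eq_zero : jordanFour ^ 3 + witnessB ^ 3 + witnessC ^ 3 = 0 := by
  norm_num [jordanFour, witnessB, witnessC, pow_succ, ← ext_iff, Fin.forall_fin_succ]

theorem det_intertwinerB : intertwinerB.det = 1 := by
  simp [intertwinerB, det_succ_row_zero, Fin.sum_univ_succ, Fin.succAbove]

theorem det_intertwinerC : intertwinerC.det = 4 := by
  simp [intertwinerC, det_succ_row_zero, Fin.sum_univ_succ, Fin.succAbove]
  norm_num

theorem witnessB_mul_intertwinerB : witnessB * intertwinerB = intertwinerB * jordanFour := by
  norm_num [witnessB, intertwinerB, jordanFour, ← ext_iff, Fin.forall_fin_succ, funext_iff]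

theorem witnessC_mul_intertwinerC : witnessC * intertwinerC = intertwinerC * jordanTwoTwo := by
  norm_num [witnessC, intertwinerC, jordanTwoTwo, ← ext_iff, Fin.forall_fin_succ, funext_iff]

end NilpotentPowerSums

open NilpotentPowerSums Matrix in
theorem stmt15 :
    ∃ a b c : Matrix (Fin 4) (Fin 4) ℂ,
      IsNilpotent a ∧ IsNilpotent b ∧ IsNilpotent c ∧
      a + b + c = 0 ∧ a ^ 2 + b ^ 2 + c ^ 2 = 0 ∧ a ^ 3 + b ^ 3 + c ^ 3 = 0 ∧
      (∃ P : Matrix (Fin 4) (Fin 4) ℂ, IsUnit P.det ∧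
        a = P * !![0,1,0,0; 0,0,1,0; 0,0,0,1; 0,0,0,0] * P⁻¹) ∧
      (∃ P : Matrix (Fin 4) (Fin 4) ℂ, IsUnit P.det ∧
        b = P * !![0,1,0,0; 0,0,1,0; 0,0,0,1; 0,0,0,0] * P⁻¹) ∧
      (∃ P : Matrix (Fin 4) (Fin 4) ℂ, IsUnit P.det ∧
        c = P * !![0,1,0,0; 0,0,0,0; 0,0,0,1; 0,0,0,0] * P⁻¹) ∧
      ¬ ∃ P : Matrix (Fin 4) (Fin 4) ℂ, IsUnit P.det ∧
        c = P * a * P⁻¹ := by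
  have hB : IsUnit intertwinerB.det := by simp [det_intertwinerB]
  have hC : IsUnit intertwinerC.det := by simp [det_intertwinerC]
  exact ⟨jordanFour, witnessB, witnessC, ⟨4, jordanFour_pow_four⟩, ⟨4, witnessB_pow_four⟩,
    ⟨2, witnessC_sq⟩, sum_eq_zero, sq_sum_eq_zero, cube_sum_eq_zero,
    ⟨1, by simp, by simp [jordanFour]⟩,
    ⟨intertwinerB, hB, eq_mul_mul_nonsing_inv_of_mul_eq hB witnessB_mul_intertwinerB⟩,
    ⟨intertwinerC, hC, eq_mul_mul_nonsing_inv_of_mul_eq hC witnessC_mul_intertwinerC⟩,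
    not_exists_conj_of_pow_eq_zero witnessC_sq jordanFour_sq_ne_zero⟩
end

section
/- Let K be an algebraically closed field of characteristic zero. Suppose a, b, c are n×n matrices over K, pairwise commuting, each annihilated by x³ - x², with a+b+c = I, a²+b²+c² = I, a³+b³+c³ = I. Then Kⁿ = ker(a - I) ⊕ ker(b - I) ⊕ ker(c - I). -/
/-!
The squares `a², b², c²` are idempotents summing to the identity. In characteristic zero, three
idempotents summing to `1` are automatically orthogonal: `e + f = 1 - g` is idempotent, so
`e f + f e = 0`, which for an idempotent `e` forces `e f = 0`. Hence `a², b², c²` split `Kⁿ` into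
the direct sum of their ranges, and for `x³ = x²` the range of `x²` is exactly `ker (x - 1)`.
-/

open LinearMap

theorem isIdempotentElem_sq_of_pow_three_eq_sq {M : Type*} [Monoid M] {x : M}
    (h : x ^ 3 = x ^ 2) : IsIdempotentElem (x ^ 2) := by
  rw [IsIdempotentElem, ← pow_add, show 2 + 2 = 3 + 1 from rfl, pow_succ, h, ← pow_succ, h]

section Ring

variable {R : Type*} [Ring R] [IsAddTorsionFree R] {e f g : R}

theorem IsIdempotentElem.mul_eq_zero_of_add_add_eq_one (he : IsIdempotentElem e)
    (hf : IsIdempotentElem f) (hg : IsIdempotentElem g) (h : e + f + g = 1) : e * f = 0 := by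
  have hef : IsIdempotentElem (e + f) := by
    rw [eq_sub_of_add_eq h]
    exact hg.one_sub
  exact he.mul_eq_zero_of_anticommute ((he.add_iff hf).mp hef)

theorem CompleteOrthogonalIdempotents.of_add_add_eq_one (he : IsIdempotentElem e)
    (hf : IsIdempotentElem f) (hg : IsIdempotentElem g) (h : e + f + g = 1) :
    CompleteOrthogonalIdempotents ![e, f, g] := by
  refine (CompleteOrthogonalIdempotents.iff_ortho_complete).mpr ⟨?_, ?_⟩
  · intro i j hij
    fin_cases i <;> fin_cases j
    exacts [absurd rfl hij, he.mul_eq_zero_of_add_add_eq_one hf hg h,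
      (he.mul_eq_zero_of_add_add_eq_one hg hf (by rw [← h]; abel) : e * g = 0),
      (hf.mul_eq_zero_of_add_add_eq_one he hg (by rw [← h]; abel) : f * e = 0), absurd rfl hij,
      (hf.mul_eq_zero_of_add_add_eq_one hg he (by rw [← h]; abel) : f * g = 0),
      (hg.mul_eq_zero_of_add_add_eq_one he hf (by rw [← h]; abel) : g * e = 0),
      (hg.mul_eq_zero_of_add_add_eq_one hf he (by rw [← h]; abel) : g * f = 0), absurd rfl hij]
  · simpa [Fin.sum_univ_three] using h

end Ring

section Module

variable {R M ι : Type*} [Semiring R] [AddCommMonoid M] [Module R M] {e : ι → Module.End R M}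

theorem OrthogonalIdempotents.iSupIndep_range (he : OrthogonalIdempotents e) :
    iSupIndep fun i ↦ range (e i) := by
  refine iSupIndep_def.mpr fun i ↦ Submodule.disjoint_def.mpr ?_
  rintro _ ⟨w, rfl⟩ hw
  have hle : ⨆ (j) (_ : j ≠ i), range (e j) ≤ ker (e i) :=
    iSup₂_le fun j hj ↦ range_le_ker_iff.mpr (he.ortho hj.symm)
  simpa [← Module.End.mul_apply, (he.idem i).eq] using hle hw

theorem CompleteOrthogonalIdempotents.iSup_range_eq_top [Fintype ι]
    (he : CompleteOrthogonalIdempotents e) : ⨆ i, range (e i) = ⊤ := by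
  refine eq_top_iff.mpr fun v _ ↦ ?_
  have hv : v = ∑ i, e i v := by
    rw [← LinearMap.sum_apply, he.complete, Module.End.one_apply]
  rw [hv]
  exact Submodule.sum_mem _ fun i _ ↦ Submodule.mem_iSup_of_mem i (mem_range_self _ _)

end Module

theorem LinearMap.ker_sub_one_eq_range_sq {R M : Type*} [Ring R] [AddCommGroup M] [Module R M]
    {f : Module.End R M} (hf : f ^ 3 = f ^ 2) : ker (f - 1) = range (f ^ 2) := by
  ext v
  constructor
  · intro hv
    have hfv : f v = v := sub_eq_zero.mp hv
    exact ⟨v, by rw [sq, Module.End.mul_apply, hfv, hfv]⟩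
  · rintro ⟨w, rfl⟩
    rw [mem_ker, sub_apply, Module.End.one_apply, ← Module.End.mul_apply, ← pow_succ', hf,
      sub_self]

theorem Matrix.ker_toLin'_sub_one_eq_range_sq {R m : Type*} [CommRing R] [Fintype m]
    [DecidableEq m] {x : Matrix m m R} (hx : x ^ 3 = x ^ 2) :
    ker (Matrix.toLin' (x - 1)) = range (Matrix.toLin' (x ^ 2)) := by
  rw [map_sub, Matrix.toLin'_one, ← Module.End.one_eq_id, Matrix.toLin'_pow]
  exact ker_sub_one_eq_range_sq (by rw [← Matrix.toLin'_pow, ← Matrix.toLin'_pow, hx])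

theorem stmt18_general {K : Type*} [Field K] [CharZero K] {n : ℕ}
    (a b c : Matrix (Fin n) (Fin n) K)
    (ha : a ^ 3 = a ^ 2) (hb : b ^ 3 = b ^ 2) (hc : c ^ 3 = c ^ 2)
    (h2 : a ^ 2 + b ^ 2 + c ^ 2 = 1) :
    iSupIndep
      (![LinearMap.ker (Matrix.toLin' (a - 1)),
         LinearMap.ker (Matrix.toLin' (b - 1)),
         LinearMap.ker (Matrix.toLin' (c - 1))] :
        Fin 3 → Submodule K (Fin n → K)) ∧
    (⨆ i, (![LinearMap.ker (Matrix.toLin' (a - 1)),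
         LinearMap.ker (Matrix.toLin' (b - 1)),
         LinearMap.ker (Matrix.toLin' (c - 1))] :
        Fin 3 → Submodule K (Fin n → K)) i) = ⊤ := by
  have : IsAddTorsionFree (Matrix (Fin n) (Fin n) K) := .of_isTorsionFree K _
  have he := (CompleteOrthogonalIdempotents.of_add_add_eq_one
    (isIdempotentElem_sq_of_pow_three_eq_sq ha) (isIdempotentElem_sq_of_pow_three_eq_sq hb)
    (isIdempotentElem_sq_of_pow_three_eq_sq hc) h2).map Matrix.toLinAlgEquiv'.toRingHom
  have hker : (![ker (Matrix.toLin' (a - 1)), ker (Matrix.toLin' (b - 1)),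
      ker (Matrix.toLin' (c - 1))] : Fin 3 → Submodule K (Fin n → K)) =
      fun i ↦ range ((Matrix.toLinAlgEquiv'.toRingHom ∘ ![a ^ 2, b ^ 2, c ^ 2]) i) := by
    ext1 i
    fin_cases i
    exacts [Matrix.ker_toLin'_sub_one_eq_range_sq ha, Matrix.ker_toLin'_sub_one_eq_range_sq hb,
      Matrix.ker_toLin'_sub_one_eq_range_sq hc]
  rw [hker]
  exact ⟨he.iSupIndep_range, he.iSup_range_eq_top⟩

theorem stmt18 {K : Type*} [Field K] [IsAlgClosed K] [CharZero K] {n : ℕ}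
    (a b c : Matrix (Fin n) (Fin n) K)
    (hab : a * b = b * a) (hac : a * c = c * a) (hbc : b * c = c * b)
    (ha : a ^ 3 = a ^ 2) (hb : b ^ 3 = b ^ 2) (hc : c ^ 3 = c ^ 2)
    (h1 : a + b + c = 1)
    (h2 : a ^ 2 + b ^ 2 + c ^ 2 = 1)
    (h3 : a ^ 3 + b ^ 3 + c ^ 3 = 1) :
    iSupIndep
      (![LinearMap.ker (Matrix.toLin' (a - 1)),
         LinearMap.ker (Matrix.toLin' (b - 1)),
         LinearMap.ker (Matrix.toLin' (c - 1))] :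
        Fin 3 → Submodule K (Fin n → K)) ∧
    (⨆ i, (![LinearMap.ker (Matrix.toLin' (a - 1)),
         LinearMap.ker (Matrix.toLin' (b - 1)),
         LinearMap.ker (Matrix.toLin' (c - 1))] :
        Fin 3 → Submodule K (Fin n → K)) i) = ⊤ :=
  stmt18_general a b c ha hb hc h2
end
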